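/- For any ρ ≥ 0 and any bounded domain Ω ⊂ ℝ², the thermodynamic energy per unit area at unit statistics parameter satisfies e(1, ρ) = |Ω| · liminf_{β→∞} E₀(Ω, β, ρ)/β; that is, the large-volume limit at fixed β is equivalent to the large-β limit at fixed volume. -/

import Mathlib

noncomputable section

open MeasureTheory Filter Topology Pointwise Set Metric

abbrev E2 := EuclideanSpace ℝ (Fin 2)

/-- `x^⊥ = (-x₂, x₁)`. -/
def perp (z : E2) : E2 := WithLp.toLp 2 (fun i => if i = 0 then -(z 1) else z 0)

/-- `∇^⊥ w₀ (z) = z^⊥ / |z|²` where `w₀(z) = log |z|`. -/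
def gradPerpW0 (z : E2) : E2 := (‖z‖ ^ 2)⁻¹ • perp z

/-- The self-consistent vector potential `A[ϱ](x) = ∫ ∇^⊥w₀(x−y) ϱ(y) dy`. -/
def vecA (ϱ : E2 → ℝ) (x : E2) : E2 := ∫ y, ϱ y • gradPerpW0 (x - y)

/-- the `j`-th component of the covariant gradient `(∇ + iβA[ϱ])u` at `x`. -/
def covGrad (β : ℝ) (ϱ : E2 → ℝ) (u : E2 → ℂ) (x : E2) (j : Fin 2) : ℂ :=
  fderiv ℝ u x (EuclideanSpace.single j 1) + (((β * vecA ϱ x j : ℝ)) : ℂ) * Complex.I * u x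

/-- Magnetic kinetic energy `∫_Ω |(-i∇ + βA[ϱ])u|²` with a prescribed density `ϱ`. -/
def magKinetic (Ω : Set E2) (β : ℝ) (ϱ : E2 → ℝ) (u : E2 → ℂ) : ℝ :=
  ∫ x in Ω, ∑ j : Fin 2, ‖covGrad β ϱ u x j‖ ^ 2

/-- `|u|²` extended by zero outside `Ω`. -/
def density (Ω : Set E2) (u : E2 → ℂ) : E2 → ℝ := Ω.indicator fun y => ‖u y‖ ^ 2

/-- The average-field functional `ℰ^{af}_{Ω,β}[u] = ∫_Ω |(-i∇+βA[|u|²1_Ω])u|²`. -/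
def afEnergy (Ω : Set E2) (β : ℝ) (u : E2 → ℂ) : ℝ := magKinetic Ω β (density Ω u) u

/-- Membership in `H¹(Ω)`. -/
def MemH1 (Ω : Set E2) (u : E2 → ℂ) : Prop :=
  AEStronglyMeasurable u (volume.restrict Ω) ∧
  Integrable (fun x => ‖u x‖ ^ 2) (volume.restrict Ω) ∧
  (∀ᵐ x ∂(volume.restrict Ω), DifferentiableAt ℝ u x) ∧
  Integrable (fun x => ‖fderiv ℝ u x‖ ^ 2) (volume.restrict Ω)

/-- Membership in `H¹₀(Ω)`: an `H¹` function on all of `ℝ²` vanishing outside `Ω`. -/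
def MemH10 (Ω : Set E2) (u : E2 → ℂ) : Prop :=
  MemH1 univ u ∧ ∀ x ∉ Ω, u x = 0

/-- mass `∫_Ω |u|²`. -/
def mass (Ω : Set E2) (u : E2 → ℂ) : ℝ := ∫ x in Ω, ‖u x‖ ^ 2

/-- Dirichlet ground-state energy `E₀(Ω,β,M)`. -/
def dirichletE (Ω : Set E2) (β M : ℝ) : ℝ :=
  sInf {e | ∃ u, MemH10 Ω u ∧ mass Ω u = M ∧ e = afEnergy Ω β u}

/-- Neumann ground-state energy `E(Ω,β,M)`. -/
def neumannE (Ω : Set E2) (β M : ℝ) : ℝ :=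
  sInf {e | ∃ u, MemH1 Ω u ∧ mass Ω u = M ∧ e = afEnergy Ω β u}

/-- The open unit square `Q ⊂ ℝ²`. -/
def unitSquare : Set E2 := {x | x 0 ∈ Ioo (0:ℝ) 1 ∧ x 1 ∈ Ioo (0:ℝ) 1}

/-- `Ω` has Lipschitz boundary: near each boundary point, up to a rigid (linear isometric)
change of coordinates, `Ω` is the subgraph of a Lipschitz function. -/
def HasLipschitzBoundary (Ω : Set E2) : Prop :=
  ∀ x ∈ frontier Ω, ∃ ε : ℝ, 0 < ε ∧ ∃ (g : E2 ≃ₗᵢ[ℝ] E2) (f : ℝ → ℝ) (K : NNReal),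
    LipschitzWith K f ∧
    Ω ∩ ball x ε = {y ∈ ball x ε | (g (y - x)) 1 < f ((g (y - x)) 0)}

/-!
Two scalings of `ℰ^{af}` do all the work. The dilation `u ↦ u(·/L)` maps `H¹₀(Ω)` onto
`H¹₀(LΩ)` and multiplies the mass by `L²`; since `∇^⊥w₀` is homogeneous of degree `-1`,
`A[ϱ(·/L)] = L · A[ϱ](·/L)`, so the energy is unchanged once `β` is replaced by `βL²`.
Multiplying `u` by `√t` multiplies mass and energy by `t` and, `A` being linear in the density,
replaces `β` by `βt`. Together, `E₀(LΩ, 1, ρL²|Ω|) = |Ω| · E₀(Ω, L²|Ω|, ρ)`, and `β = L²|Ω|`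
runs through all large reals as `L → ∞`.
-/

lemma norm_ofReal_mul_sq (c : ℝ) (w : ℂ) : ‖(c : ℂ) * w‖ ^ 2 = c ^ 2 * ‖w‖ ^ 2 := by
  rw [norm_mul, Complex.norm_real, Real.norm_eq_abs, mul_pow, sq_abs]

lemma perp_smul (c : ℝ) (z : E2) : perp (c • z) = c • perp z := by
  ext i
  simp only [perp, PiLp.toLp_apply, PiLp.smul_apply, smul_eq_mul]
  split <;> ring

lemma gradPerpW0_smul (c : ℝ) (z : E2) : gradPerpW0 (c • z) = c⁻¹ • gradPerpW0 z := by
  rw [gradPerpW0, gradPerpW0, perp_smul, smul_smul, smul_smul, norm_smul, Real.norm_eq_abs,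
    mul_pow, sq_abs]
  congr 1
  rcases eq_or_ne c 0 with rfl | hc
  · simp
  · field_simp

lemma vecA_const_mul (c : ℝ) (ϱ : E2 → ℝ) (x : E2) :
    vecA (fun y => c * ϱ y) x = c • vecA ϱ x := by
  simp only [vecA, mul_smul, integral_smul]

lemma vecA_comp_smul (ϱ : E2 → ℝ) {L : ℝ} (hL : L ≠ 0) (x : E2) :
    vecA (fun y => ϱ (L⁻¹ • y)) x = L • vecA ϱ (L⁻¹ • x) := by
  have hsub : ∀ z : E2, x - L • z = L • (L⁻¹ • x - z) := fun z => by
    rw [smul_sub, smul_inv_smul₀ hL]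
  calc vecA (fun y => ϱ (L⁻¹ • y)) x
      = ∫ y, (fun z => ϱ z • gradPerpW0 (x - L • z)) (L⁻¹ • y) := by
        simp only [vecA, smul_inv_smul₀ hL]
    _ = |L ^ 2| • ∫ z, ϱ z • gradPerpW0 (x - L • z) := by
        rw [Measure.integral_comp_inv_smul volume (fun z => ϱ z • gradPerpW0 (x - L • z)) L,
          finrank_euclideanSpace_fin]
    _ = L • vecA ϱ (L⁻¹ • x) := by
        simp only [hsub, gradPerpW0_smul, smul_comm (ϱ _) L⁻¹]
        rw [integral_smul, smul_smul, abs_sq, sq, mul_assoc, mul_inv_cancel₀ hL, mul_one, vecA]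

lemma covGrad_const_mul (β c : ℝ) (ϱ : E2 → ℝ) (u : E2 → ℂ) (x : E2) (j : Fin 2) :
    covGrad β (fun y => c ^ 2 * ϱ y) (fun y => (c : ℂ) * u y) x j
      = c * covGrad (β * c ^ 2) ϱ u x j := by
  have hderiv : fderiv ℝ (fun y => (c : ℂ) * u y) x = (c : ℂ) • fderiv ℝ u x :=
    congrFun (fderiv_const_smul_field (c : ℂ) (f := u)) x
  simp only [covGrad, hderiv, vecA_const_mul, smul_apply, smul_eq_mul, PiLp.smul_apply]
  push_cast
  ring

lemma covGrad_comp_smul (β : ℝ) {L : ℝ} (hL : L ≠ 0) (ϱ : E2 → ℝ) (u : E2 → ℂ) (x : E2)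
    (j : Fin 2) :
    covGrad β (fun y => ϱ (L⁻¹ • y)) (fun y => u (L⁻¹ • y)) x j
      = (L⁻¹ : ℂ) * covGrad (β * L ^ 2) ϱ u (L⁻¹ • x) j := by
  have hLC : (L : ℂ) ≠ 0 := Complex.ofReal_ne_zero.2 hL
  simp only [covGrad, fderiv_comp_smul, vecA_comp_smul ϱ hL, smul_apply,
    PiLp.smul_apply, smul_eq_mul, Complex.real_smul]
  push_cast
  field_simp

lemma setIntegral_smul_comp_inv_smul (f : E2 → ℝ) (Ω : Set E2) {L : ℝ} (hL : L ≠ 0) :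
    ∫ x in L • Ω, f (L⁻¹ • x) = L ^ 2 * ∫ x in Ω, f x := by
  rw [Measure.setIntegral_comp_smul volume f (L • Ω) (inv_ne_zero hL), inv_smul_smul₀ hL,
    finrank_euclideanSpace_fin, inv_pow, inv_inv, abs_sq, smul_eq_mul]

lemma mass_const_mul (Ω : Set E2) (u : E2 → ℂ) (c : ℝ) :
    mass Ω (fun x => (c : ℂ) * u x) = c ^ 2 * mass Ω u := by
  simp only [mass, norm_ofReal_mul_sq, integral_const_mul]

lemma mass_comp_smul (Ω : Set E2) (u : E2 → ℂ) {L : ℝ} (hL : L ≠ 0) :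
    mass (L • Ω) (fun x => u (L⁻¹ • x)) = L ^ 2 * mass Ω u :=
  setIntegral_smul_comp_inv_smul (fun y => ‖u y‖ ^ 2) Ω hL

lemma density_const_mul (Ω : Set E2) (u : E2 → ℂ) (c : ℝ) :
    density Ω (fun x => (c : ℂ) * u x) = fun y => c ^ 2 * density Ω u y := by
  funext y
  by_cases hy : y ∈ Ω
  · simp only [density, indicator_of_mem hy, norm_ofReal_mul_sq]
  · simp only [density, indicator_of_notMem hy, mul_zero]

lemma density_comp_smul (Ω : Set E2) (u : E2 → ℂ) {L : ℝ} (hL : L ≠ 0) :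
    density (L • Ω) (fun x => u (L⁻¹ • x)) = fun y => density Ω u (L⁻¹ • y) := by
  funext y
  have hmem : y ∈ L • Ω ↔ L⁻¹ • y ∈ Ω := mem_smul_set_iff_inv_smul_mem₀ hL Ω y
  by_cases hy : L⁻¹ • y ∈ Ω
  · simp only [density, indicator_of_mem hy, indicator_of_mem (hmem.2 hy)]
  · simp only [density, indicator_of_notMem hy, indicator_of_notMem (mt hmem.1 hy)]

lemma magKinetic_const_mul (Ω : Set E2) (β c : ℝ) (ϱ : E2 → ℝ) (u : E2 → ℂ) :
    magKinetic Ω β (fun y => c ^ 2 * ϱ y) (fun y => (c : ℂ) * u y)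
      = c ^ 2 * magKinetic Ω (β * c ^ 2) ϱ u := by
  simp only [magKinetic, covGrad_const_mul, norm_ofReal_mul_sq, ← Finset.mul_sum,
    integral_const_mul]

lemma magKinetic_comp_smul (Ω : Set E2) (β : ℝ) (ϱ : E2 → ℝ) (u : E2 → ℂ) {L : ℝ} (hL : L ≠ 0) :
    magKinetic (L • Ω) β (fun y => ϱ (L⁻¹ • y)) (fun y => u (L⁻¹ • y))
      = magKinetic Ω (β * L ^ 2) ϱ u := by
  have hnorm : ∀ w : ℂ, ‖(L⁻¹ : ℂ) * w‖ ^ 2 = (L ^ 2)⁻¹ * ‖w‖ ^ 2 := fun w => by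
    rw [← Complex.ofReal_inv, norm_ofReal_mul_sq, inv_pow]
  simp only [magKinetic, covGrad_comp_smul β hL, hnorm, ← Finset.mul_sum, integral_const_mul,
    setIntegral_smul_comp_inv_smul (fun z => ∑ j, ‖covGrad (β * L ^ 2) ϱ u z j‖ ^ 2) Ω hL]
  rw [inv_mul_cancel_left₀ (pow_ne_zero 2 hL)]

lemma afEnergy_const_mul (Ω : Set E2) (β c : ℝ) (u : E2 → ℂ) :
    afEnergy Ω β (fun x => (c : ℂ) * u x) = c ^ 2 * afEnergy Ω (β * c ^ 2) u := by
  rw [afEnergy, density_const_mul, magKinetic_const_mul, afEnergy]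

lemma afEnergy_comp_smul (Ω : Set E2) (β : ℝ) (u : E2 → ℂ) {L : ℝ} (hL : L ≠ 0) :
    afEnergy (L • Ω) β (fun x => u (L⁻¹ • x)) = afEnergy Ω (β * L ^ 2) u := by
  rw [afEnergy, density_comp_smul Ω u hL, magKinetic_comp_smul Ω β _ u hL, afEnergy]

lemma MemH1.const_mul {Ω : Set E2} {u : E2 → ℂ} (hu : MemH1 Ω u) (a : ℂ) :
    MemH1 Ω (fun x => a * u x) := by
  obtain ⟨hm, hi, hd, hf⟩ := hu
  have hderiv : ∀ x, fderiv ℝ (fun y => a * u y) x = a • fderiv ℝ u x :=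
    congrFun (fderiv_const_smul_field a (f := u))
  refine ⟨hm.const_mul a, ?_, hd.mono fun x hx => hx.const_mul a, ?_⟩
  · simpa only [norm_mul, mul_pow] using hi.const_mul (‖a‖ ^ 2)
  · simpa only [hderiv, norm_smul, mul_pow] using hf.const_mul (‖a‖ ^ 2)

lemma MemH1.comp_smul {u : E2 → ℂ} (hu : MemH1 univ u) {L : ℝ} (hL : L ≠ 0) :
    MemH1 univ (fun x => u (L⁻¹ • x)) := by
  obtain ⟨hm, hi, hd, hf⟩ := hu
  simp only [MemH1, Measure.restrict_univ] at hm hi hd hf ⊢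
  have hqmp : Measure.QuasiMeasurePreserving (fun x : E2 => L⁻¹ • x) volume volume := by
    simpa using Measure.quasiMeasurePreserving_smul (volume : Measure E2) (inv_ne_zero hL)
  refine ⟨hm.comp_quasiMeasurePreserving hqmp, hi.comp_smul (inv_ne_zero hL),
    (hqmp.ae hd).mono fun x hx => hx.comp x (differentiableAt_id.const_smul L⁻¹), ?_⟩
  simpa only [fderiv_comp_smul, norm_smul, mul_pow, Real.norm_eq_abs, sq_abs]
    using (hf.comp_smul (inv_ne_zero hL)).const_mul (L⁻¹ ^ 2)

lemma MemH10.const_mul {Ω : Set E2} {u : E2 → ℂ} (hu : MemH10 Ω u) (a : ℂ) :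
    MemH10 Ω (fun x => a * u x) :=
  ⟨hu.1.const_mul a, fun x hx => by simp only [hu.2 x hx, mul_zero]⟩

lemma MemH10.comp_smul {Ω : Set E2} {u : E2 → ℂ} (hu : MemH10 Ω u) {L : ℝ} (hL : L ≠ 0) :
    MemH10 (L • Ω) (fun x => u (L⁻¹ • x)) :=
  ⟨hu.1.comp_smul hL, fun x hx => hu.2 _ fun h => hx ((mem_smul_set_iff_inv_smul_mem₀ hL Ω x).2 h)⟩

def dirichletEnergies (Ω : Set E2) (β M : ℝ) : Set ℝ :=
  {e | ∃ u, MemH10 Ω u ∧ mass Ω u = M ∧ e = afEnergy Ω β u}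

lemma smul_dirichletEnergies_subset (Ω : Set E2) (β M c : ℝ) :
    c ^ 2 • dirichletEnergies Ω (β * c ^ 2) M ⊆ dirichletEnergies Ω β (c ^ 2 * M) := by
  rintro _ ⟨_, ⟨u, hu, rfl, rfl⟩, rfl⟩
  exact ⟨fun x => (c : ℂ) * u x, hu.const_mul c, mass_const_mul Ω u c,
    (afEnergy_const_mul Ω β c u).symm⟩

lemma dirichletEnergies_mul_mass (Ω : Set E2) (β M : ℝ) {c : ℝ} (hc : c ≠ 0) :
    dirichletEnergies Ω β (c ^ 2 * M) = c ^ 2 • dirichletEnergies Ω (β * c ^ 2) M := by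
  refine Subset.antisymm ?_ (smul_dirichletEnergies_subset Ω β M c)
  rw [subset_smul_set_iff₀ (pow_ne_zero 2 hc), ← inv_pow]
  convert smul_dirichletEnergies_subset Ω (β * c ^ 2) (c ^ 2 * M) c⁻¹ using 2 <;> field_simp

lemma dirichletEnergies_comp_smul_subset (Ω : Set E2) (β M : ℝ) {L : ℝ} (hL : L ≠ 0) :
    dirichletEnergies Ω (β * L ^ 2) M ⊆ dirichletEnergies (L • Ω) β (L ^ 2 * M) := by
  rintro _ ⟨u, hu, rfl, rfl⟩
  exact ⟨fun x => u (L⁻¹ • x), hu.comp_smul hL, mass_comp_smul Ω u hL,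
    (afEnergy_comp_smul Ω β u hL).symm⟩

lemma dirichletEnergies_smul (Ω : Set E2) (β M : ℝ) {L : ℝ} (hL : L ≠ 0) :
    dirichletEnergies (L • Ω) β (L ^ 2 * M) = dirichletEnergies Ω (β * L ^ 2) M := by
  refine Subset.antisymm ?_ (dirichletEnergies_comp_smul_subset Ω β M hL)
  convert dirichletEnergies_comp_smul_subset (L • Ω) (β * L ^ 2) (L ^ 2 * M) (inv_ne_zero hL)
    using 2 <;> first | exact (inv_smul_smul₀ hL Ω).symm | field_simp

lemma dirichletE_mul_mass (Ω : Set E2) (β M : ℝ) {t : ℝ} (ht : 0 < t) :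
    dirichletE Ω β (t * M) = t * dirichletE Ω (β * t) M := by
  obtain ⟨c, hc, rfl⟩ : ∃ c : ℝ, c ≠ 0 ∧ c ^ 2 = t :=
    ⟨√t, (Real.sqrt_pos.2 ht).ne', Real.sq_sqrt ht.le⟩
  rw [dirichletE, dirichletE, ← dirichletEnergies, ← dirichletEnergies,
    dirichletEnergies_mul_mass Ω β M hc, Real.sInf_smul_of_nonneg (sq_nonneg c), smul_eq_mul]

lemma dirichletE_smul (Ω : Set E2) (β M : ℝ) {L : ℝ} (hL : L ≠ 0) :
    dirichletE (L • Ω) β (L ^ 2 * M) = dirichletE Ω (β * L ^ 2) M :=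
  congrArg sInf (dirichletEnergies_smul Ω β M hL)

lemma liminf_const_mul_of_pos {α : Type*} {f : Filter α} (u : α → ℝ) {a : ℝ} (ha : 0 < a) :
    liminf (fun x => a * u x) f = a * liminf u f := by
  have hbounds : {b | ∀ᶠ x in f, b ≤ a * u x} = a • {b | ∀ᶠ x in f, b ≤ u x} := by
    ext b
    simp only [mem_smul_set_iff_inv_smul_mem₀ ha.ne', smul_eq_mul, mem_ofPred_eq,
      inv_mul_le_iff₀ ha]
  rw [liminf_eq, liminf_eq, hbounds, Real.sSup_smul_of_nonneg ha.le, smul_eq_mul]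

lemma map_sq_mul_atTop {a : ℝ} (ha : 0 < a) : map (fun x : ℝ => x ^ 2 * a) atTop = atTop := by
  refine le_antisymm ((tendsto_pow_atTop two_ne_zero).atTop_mul_const ha) fun s hs => ?_
  obtain ⟨N, hN⟩ := mem_atTop_sets.1 (mem_map.1 hs)
  refine mem_atTop_sets.2 ⟨N ^ 2 * a, fun b hb => ?_⟩
  have hNb : N ^ 2 ≤ b / a := (le_div_iff₀ ha).2 hb
  simpa only [mem_preimage, Real.sq_sqrt ((sq_nonneg N).trans hNb), div_mul_cancel₀ b ha.ne']
    using hN _ (Real.le_sqrt_of_sq_le hNb)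

lemma liminf_comp_sq_mul_atTop (f : ℝ → ℝ) {a : ℝ} (ha : 0 < a) :
    liminf (fun x => f (x ^ 2 * a)) atTop = liminf f atTop :=
  (liminf_comp f (fun x => x ^ 2 * a) atTop).trans (by rw [map_sq_mul_atTop ha])

theorem thermo_limit_eq_large_beta_general (Ω : Set E2) (ρ : ℝ) :
    Filter.liminf
        (fun L : ℝ =>
          dirichletE (L • Ω) 1 (ρ * L ^ 2 * (volume Ω).toReal) / (L ^ 2 * (volume Ω).toReal))
        atTop
      = (volume Ω).toReal * Filter.liminf (fun β : ℝ => dirichletE Ω β ρ / β) atTop := by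
  have ha₀ : 0 ≤ (volume Ω).toReal := ENNReal.toReal_nonneg
  generalize (volume Ω).toReal = a at ha₀ ⊢
  obtain rfl | ha := ha₀.eq_or_lt
  -- null or infinite measure: both sides vanish, as `x / 0 = 0`
  · simp only [mul_zero, div_zero, zero_mul, liminf_const]
  have hscale : ∀ L : ℝ, L ≠ 0 → dirichletE (L • Ω) 1 (ρ * L ^ 2 * a) / (L ^ 2 * a)
      = a * (dirichletE Ω (L ^ 2 * a) ρ / (L ^ 2 * a)) := fun L hL => by
    rw [show ρ * L ^ 2 * a = L ^ 2 * (a * ρ) by ring, dirichletE_smul Ω 1 _ hL, one_mul,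
      dirichletE_mul_mass Ω _ ρ ha, mul_div_assoc]
  rw [liminf_congr ((eventually_ne_atTop 0).mono hscale), liminf_const_mul_of_pos _ ha,
    liminf_comp_sq_mul_atTop (fun β => dirichletE Ω β ρ / β) ha]

/-- **Equivalence of the large-volume and large-`β` limits.**
For any bounded domain `Ω ⊂ ℝ²` and any `ρ ≥ 0`, the thermodynamic energy per unit area at
unit statistics parameter, `e(1,ρ) := liminf_{L→∞} E₀(LΩ,1,ρL²|Ω|)/(L²|Ω|)`, satisfies
`e(1,ρ) = |Ω| · liminf_{β→∞} E₀(Ω,β,ρ)/β`. -/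
theorem thermo_limit_eq_large_beta (Ω : Set E2) (hΩ : IsOpen Ω) (hne : Ω.Nonempty)
    (hbd : Bornology.IsBounded Ω) (ρ : ℝ) (hρ : 0 ≤ ρ) :
    Filter.liminf
        (fun L : ℝ =>
          dirichletE (L • Ω) 1 (ρ * L ^ 2 * (volume Ω).toReal) / (L ^ 2 * (volume Ω).toReal))
        atTop
      = (volume Ω).toReal * Filter.liminf (fun β : ℝ => dirichletE Ω β ρ / β) atTop :=
  thermo_limit_eq_large_beta_general Ω ρ
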